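/- For all natural numbers a, b, c ≥ 0, the following identity holds in M₂(R): 2^{a+b+c}·[x,y]·tᵃuᵇvᶜ = [x,y]·(ad x)^{2a}·(ad y)^{2b}·(ad x ad y)ᶜ. -/

import Mathlib

/-!
Under `sl₂ ≅ (R³, ×)` the trace form becomes the dot product, so for traceless `2 × 2` matrices
`[[z, w], w'] = 2 tr(w w') z - 2 tr(z w') w` (the vector triple product). Since `[x, y]` is
trace-orthogonal to both `x` and `y`, each of the `R`-linear operators `(ad x)²`, `(ad y)²` and
`ad x ad y` multiplies `[x, y]` by `2t`, `2u` and `2v` respectively.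
-/

open Matrix MvPolynomial

noncomputable section

variable (K : Type*) [Field K] [CharZero K]

/-- The first generic traceless 2×2 matrix `x = !![x₁₁, x₁₂; x₂₁, -x₁₁]` over
`R = K[x₁₁,x₁₂,x₂₁,y₁₁,y₁₂,y₂₁]`, realized as `MvPolynomial (Fin 6) K` with
`x₁₁ = X 0, x₁₂ = X 1, x₂₁ = X 2, y₁₁ = X 3, y₁₂ = X 4, y₂₁ = X 5`. -/
def x : Matrix (Fin 2) (Fin 2) (MvPolynomial (Fin 6) K) := !![X 0, X 1; X 2, -(X 0)]

/-- The second generic traceless 2×2 matrix `y = !![y₁₁, y₁₂; y₂₁, -y₁₁]`. -/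
def y : Matrix (Fin 2) (Fin 2) (MvPolynomial (Fin 6) K) := !![X 3, X 4; X 5, -(X 3)]

/-- `t = tr(x²)`. -/
def t : MvPolynomial (Fin 6) K := (x K * x K).trace

/-- `u = tr(y²)`. -/
def u : MvPolynomial (Fin 6) K := (y K * y K).trace

/-- `v = tr(xy)`. -/
def v : MvPolynomial (Fin 6) K := (x K * y K).trace

/-- The right adjoint action `z ↦ z(ad w) = [z,w]`. -/
def ad (w z : Matrix (Fin 2) (Fin 2) (MvPolynomial (Fin 6) K)) :
    Matrix (Fin 2) (Fin 2) (MvPolynomial (Fin 6) K) := ⁅z, w⁆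

namespace Matrix

variable {R : Type*} [CommRing R]

theorem trace_lie_mul_left {n : Type*} [Fintype n] [DecidableEq n] (A B : Matrix n n R) :
    trace (⁅A, B⁆ * A) = 0 := by
  rw [Ring.lie_def, sub_mul, trace_sub, mul_assoc, trace_mul_comm, mul_assoc, sub_self]

theorem trace_lie_mul_right {n : Type*} [Fintype n] [DecidableEq n] (A B : Matrix n n R) :
    trace (⁅A, B⁆ * B) = 0 := by
  rw [Ring.lie_def, sub_mul, trace_sub, mul_assoc B, trace_mul_comm B, sub_self]

theorem lie_lie_fin_two_of_trace_eq_zero {z w w' : Matrix (Fin 2) (Fin 2) R}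
    (hz : trace z = 0) (hw : trace w = 0) (hw' : trace w' = 0) :
    ⁅⁅z, w⁆, w'⁆ = (2 * trace (w * w')) • z - (2 * trace (z * w')) • w := by
  rw [trace_fin_two, add_eq_zero_iff_eq_neg] at hz hw hw'
  rw [z.eta_fin_two, w.eta_fin_two, w'.eta_fin_two, hz, hw, hw']
  ext i j
  fin_cases i <;> fin_cases j <;>
    simp [Ring.lie_def, trace_fin_two] <;> ring

end Matrix

theorem Function.iterate_smul_of_apply_eq_smul {R M : Type*} [Monoid R] [MulAction R M]
    {f : M → M} (hf : ∀ (r : R) (m : M), f (r • m) = r • f m) {m : M} {s : R}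
    (h : f m = s • m) (n : ℕ) (r : R) : f^[n] (r • m) = (r * s ^ n) • m := by
  induction n generalizing r with
  | zero => simp
  | succ n ih => rw [Function.iterate_succ_apply, hf, h, smul_smul, ih, mul_assoc, pow_succ']

section GenericTraceless

variable {K}
omit [CharZero K]

theorem trace_x : (x K).trace = 0 := by simp [x, trace_fin_two]

theorem trace_y : (y K).trace = 0 := by simp [y, trace_fin_two]

theorem trace_lie_x_y : ⁅x K, y K⁆.trace = 0 :=
  LieAlgebra.matrix_trace_commutator_zero _ _ _ _

theorem ad_smul (w : Matrix (Fin 2) (Fin 2) (MvPolynomial (Fin 6) K)) (r : MvPolynomial (Fin 6) K)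
    (z : Matrix (Fin 2) (Fin 2) (MvPolynomial (Fin 6) K)) : ad K w (r • z) = r • ad K w z := by
  simp only [ad, Ring.lie_def, smul_mul_assoc, mul_smul_comm, smul_sub]

theorem ad_comp_ad_smul (w w' : Matrix (Fin 2) (Fin 2) (MvPolynomial (Fin 6) K))
    (r : MvPolynomial (Fin 6) K) (z : Matrix (Fin 2) (Fin 2) (MvPolynomial (Fin 6) K)) :
    (ad K w' ∘ ad K w) (r • z) = r • (ad K w' ∘ ad K w) z := by
  simp only [Function.comp_apply, ad_smul]

theorem ad_x_ad_x_lie : (ad K (x K) ∘ ad K (x K)) ⁅x K, y K⁆ = (2 * t K) • ⁅x K, y K⁆ := by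
  simp [ad, t, lie_lie_fin_two_of_trace_eq_zero trace_lie_x_y trace_x trace_x,
    trace_lie_mul_left]

theorem ad_y_ad_y_lie : (ad K (y K) ∘ ad K (y K)) ⁅x K, y K⁆ = (2 * u K) • ⁅x K, y K⁆ := by
  simp [ad, u, lie_lie_fin_two_of_trace_eq_zero trace_lie_x_y trace_y trace_y,
    trace_lie_mul_right]

theorem ad_x_ad_y_lie : (ad K (y K) ∘ ad K (x K)) ⁅x K, y K⁆ = (2 * v K) • ⁅x K, y K⁆ := by
  simp [ad, v, lie_lie_fin_two_of_trace_eq_zero trace_lie_x_y trace_x trace_y,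
    trace_lie_mul_right]

end GenericTraceless

/-- For `a, b, c ≥ 0`: `2^{a+b+c}[x,y]tᵃuᵇvᶜ = [x,y](ad x)^{2a}(ad y)^{2b}(ad x ad y)ᶜ`. -/
theorem stmt_9 (a b c : ℕ) :
    ((2 : MvPolynomial (Fin 6) K) ^ (a + b + c) * t K ^ a * u K ^ b * v K ^ c) •
        ⁅x K, y K⁆ =
      (ad K (y K) ∘ ad K (x K))^[c]
        ((ad K (y K))^[2 * b] ((ad K (x K))^[2 * a] ⁅x K, y K⁆)) := by
  have ad_iterate_two (w : Matrix (Fin 2) (Fin 2) (MvPolynomial (Fin 6) K)) :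
      (ad K w)^[2] = ad K w ∘ ad K w := rfl
  rw [Function.iterate_mul, Function.iterate_mul, ad_iterate_two, ad_iterate_two]
  conv_rhs =>
    rw [← one_smul (MvPolynomial (Fin 6) K) ⁅x K, y K⁆,
      Function.iterate_smul_of_apply_eq_smul (ad_comp_ad_smul _ _) ad_x_ad_x_lie,
      Function.iterate_smul_of_apply_eq_smul (ad_comp_ad_smul _ _) ad_y_ad_y_lie,
      Function.iterate_smul_of_apply_eq_smul (ad_comp_ad_smul _ _) ad_x_ad_y_lie]
  exact congrArg (· • ⁅x K, y K⁆) (by ring)
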